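/- Let k be a field of characteristic 2, α ∈ k with α^3 ≠ 1, and let E be the elliptic curve y^2 + α*x*y + y = x^3 in Deuring normal form. Then E(k̄) contains a point of order 2 if and only if α ≠ 0. -/
import Mathlib


/-- Over an algebraically closed field `k` of characteristic 2, the
Deuring normal form elliptic curve `y² + αxy + y = x³` (with `α³ ≠ 1`) has a
point of order 2 over `k = k̄` — i.e. an affine point with `-P = P` — if and
only if `α ≠ 0`. -/
theorem stmt_3 (k : Type*) [Field k] [IsAlgClosed k] [CharP k 2]
    (α : k) (hα : α ^ 3 ≠ 1) :
    let W : WeierstrassCurve.Affine k := ⟨α, 0, 1, 0, 0⟩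
    (∃ x y : k, W.Equation x y ∧ W.negY x y = y) ↔ α ≠ 0 := by
  intro W
  have h2 : (2 : k) = 0 := by exact_mod_cast CharP.cast_eq_zero k 2
  constructor
  · rintro ⟨x, y, heq, hneg⟩ h0
    simp only [WeierstrassCurve.Affine.negY, W, h0, zero_mul, sub_zero] at hneg
    have : (1 : k) = 0 := by linear_combination -hneg - y * h2
    exact one_ne_zero this
  · intro h0
    obtain ⟨y, hy⟩ := IsAlgClosed.exists_pow_nat_eq (α⁻¹ ^ 3) two_pos
    refine ⟨α⁻¹, y, ?_, ?_⟩
    · rw [WeierstrassCurve.Affine.equation_iff]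
      show y ^ 2 + α * α⁻¹ * y + 1 * y = α⁻¹ ^ 3 + 0 * α⁻¹ ^ 2 + 0 * α⁻¹ + 0
      rw [mul_inv_cancel₀ h0, hy]
      ring_nf
      linear_combination y * h2
    · show -y - α * α⁻¹ - 1 = y
      rw [mul_inv_cancel₀ h0]
      linear_combination -y * h2 - h2
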